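/- arXiv:1904.10120 — 2 statements merged into one kernel-verified Lean document; each statement's English description precedes it below -/
import Mathlib

section
/- Online gradient descent regret bound: Let H be a real Hilbert space, Z a set, and f : H × Z → ℝ such that for every z ∈ Z the map w ↦ f(w,z) is convex and 1-Lipschitz, with a subgradient selection g : H × Z → H satisfying ‖g(w,z)‖ ≤ 1 and f(w',z) ≥ f(w,z) + ⟨g(w,z), w' − w⟩ for all w, w', z. Fix B > 0 and a positive integer T, and let z_1, …, z_T be an arbitrary sequence in Z. Define iterates w_1 = 0 and w_{t+1} = w_t − η g(w_t, z_t) with constant step size η = B/√(2T). Then for every w ∈ H with ‖w‖ ≤ B, ∑_{t=1}^T f(w_t, z_t) ≤ ∑_{t=1}^T f(w, z_t) + √(2 B² T). -/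
open scoped RealInnerProductSpace

/-- Online gradient descent regret bound: unprojected online (sub)gradient descent
started at 0 with constant step size `η = B/√(2T)`, run on an arbitrary sequence
`z_1, …, z_T`, has regret at most `√(2 B² T)` against any comparator of norm `≤ B`. -/
theorem ogd_regret_bound
    {H : Type*} [NormedAddCommGroup H] [InnerProductSpace ℝ H] [CompleteSpace H]
    {Z : Type*}
    (f : H → Z → ℝ) (g : H → Z → H)
    (hconv : ∀ z, ConvexOn ℝ Set.univ (fun w => f w z))
    (hlip : ∀ z, LipschitzWith 1 (fun w => f w z))
    (hgnorm : ∀ w z, ‖g w z‖ ≤ 1)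
    (hsub : ∀ w w' z, f w z + ⟪g w z, w' - w⟫ ≤ f w' z)
    (B : ℝ) (hB : 0 < B) (T : ℕ) (hT : 0 < T)
    (z : ℕ → Z)
    (η : ℝ) (hη : η = B / Real.sqrt (2 * T))
    (w : ℕ → H)
    (hw1 : w 1 = 0)
    (hwrec : ∀ t, w (t + 1) = w t - η • g (w t) (z t))
    (wstar : H) (hwstar : ‖wstar‖ ≤ B) :
    ∑ t ∈ Finset.Icc 1 T, f (w t) (z t) ≤
      ∑ t ∈ Finset.Icc 1 T, f wstar (z t) + Real.sqrt (2 * B ^ 2 * T) := by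
  set D : ℕ → ℝ := fun t => ‖w t - wstar‖ ^ 2 with hD
  have hT0 : (0:ℝ) < 2 * T := by positivity
  have hs : (0:ℝ) < Real.sqrt (2 * T) := Real.sqrt_pos.2 hT0
  have hη0 : 0 < η := by rw [hη]; positivity
  -- per-step bound
  have key : ∀ t, f (w t) (z t) - f wstar (z t) ≤ (D t - D (t+1)) / (2*η) + η/2 := by
    intro t
    have hfle : f (w t) (z t) - f wstar (z t) ≤ ⟪g (w t) (z t), w t - wstar⟫ := by
      have h1 := hsub (w t) wstar (z t)
      have h2 : ⟪g (w t) (z t), wstar - w t⟫ = -⟪g (w t) (z t), w t - wstar⟫ := by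
        rw [← inner_neg_right, neg_sub]
      linarith [h1, h2.le, h2.ge]
    have hg2 : ‖g (w t) (z t)‖ ^ 2 ≤ 1 := by
      have := hgnorm (w t) (z t)
      nlinarith [norm_nonneg (g (w t) (z t))]
    have hexp : D (t+1) = D t - 2*η*⟪g (w t) (z t), w t - wstar⟫
        + η^2 * ‖g (w t) (z t)‖^2 := by
      have hw' : w (t+1) - wstar = (w t - wstar) - η • g (w t) (z t) := by
        rw [hwrec t]; abel
      simp only [hD, hw']
      rw [norm_sub_sq_real, real_inner_smul_right, norm_smul, mul_pow]
      rw [real_inner_comm]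
      simp [sq_abs]
      ring
    have hrw : (D t - D (t+1)) / (2*η) = ⟪g (w t) (z t), w t - wstar⟫
        - η * ‖g (w t) (z t)‖^2 / 2 := by
      rw [hexp]; field_simp; ring
    rw [hrw]
    nlinarith [hη0, hg2]
  -- telescoping
  have tele : ∀ n, ∑ t ∈ Finset.Icc 1 n, (D t - D (t+1)) = D 1 - D (n+1) := by
    intro n
    induction n with
    | zero => simp
    | succ n ih =>
      rw [Finset.sum_Icc_succ_top (by omega), ih]; ring
  have hsum : ∑ t ∈ Finset.Icc 1 T, f (w t) (z t)
      ≤ ∑ t ∈ Finset.Icc 1 T, f wstar (z t) + ((D 1 - D (T+1)) / (2*η) + T * (η/2)) := by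
    have h1 : ∑ t ∈ Finset.Icc 1 T, (f (w t) (z t) - f wstar (z t))
        ≤ ∑ t ∈ Finset.Icc 1 T, ((D t - D (t+1)) / (2*η) + η/2) :=
      Finset.sum_le_sum fun t _ => key t
    rw [Finset.sum_sub_distrib] at h1
    rw [Finset.sum_add_distrib, ← Finset.sum_div, tele T] at h1
    simp only [Finset.sum_const, Nat.card_Icc, Nat.add_sub_cancel, nsmul_eq_mul] at h1
    linarith
  -- bound the RHS
  have hD1 : D 1 ≤ B^2 := by
    simp only [hD, hw1, zero_sub, norm_neg]
    nlinarith [norm_nonneg wstar]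
  have hDT : 0 ≤ D (T+1) := by positivity
  have hfinal : (D 1 - D (T+1)) / (2*η) + T * (η/2) ≤ Real.sqrt (2 * B^2 * T) := by
    set s := Real.sqrt (2 * T) with hsdef
    have hsq : s ^ 2 = 2 * T := Real.sq_sqrt hT0.le
    have hsqrt : Real.sqrt (2 * B^2 * T) = B * s := by
      rw [hsdef, show 2 * B^2 * (T:ℝ) = B^2 * (2 * T) by ring,
        Real.sqrt_mul (by positivity), Real.sqrt_sq hB.le]
    rw [hsqrt, hη]
    have hle : (D 1 - D (T+1)) / (2 * (B / s)) ≤ B * s / 2 := by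
      rw [div_le_iff₀ (by positivity)]
      have h9 : B * s / 2 * (2 * (B / s)) = B^2 := by
        field_simp
      rw [h9]; linarith
    have hle2 : (T:ℝ) * (B / s / 2) = B * s / 4 := by
      have hT' : (T:ℝ) = s^2 / 2 := by rw [hsq]; ring
      rw [hT']; field_simp; ring
    rw [hle2]
    nlinarith [hle, hs, hB]
  linarith
end

section
/- Prod corollary, constant regret against the anchor expert with tuned learning rate: Under the Prod setup (experts 0,…,K; losses ℓ_t : {0,…,K} → [−M,M] with M ≥ 1; q^0_1 = 1−η, q^i_1 = η/K; p^j_t = q^j_t / ∑_{j'} q^{j'}_t; q^i_{t+1} = q^i_t(1 + η(ℓ_t(0) − ℓ_t(i)))), set η = (1/(2M))√(ln(KMT)/T) and assume T is large enough that η ≤ 1/(4M). Then ∑_{t=1}^T ∑_{j=0}^K p^j_t ℓ_t(j) ≤ ∑_{t=1}^T ℓ_t(0) + 2. -/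
/-!
The anchor expert's weight never moves: its factor is `1 + η (ℓ_t(0) - ℓ_t(0)) = 1`, so
`q^0_t = 1 - η` for every `t`. Meanwhile the total weight `W_t = ∑_j q^j_t` evolves as
`W_{t+1} = W_t (1 + η (ℓ_t(0) - ⟨p_t, ℓ_t⟩))`, and `W_1 = 1`. Since all weights stay nonnegative
when `2 M η ≤ 1`, we get `1 - η ≤ W_{T+1} ≤ exp (η R)` with `R` the regret-like quantity
`∑_t (ℓ_t(0) - ⟨p_t, ℓ_t⟩)`. Together with `exp (-2η) ≤ 1 - η` for `η ≤ 1/2` this gives `R ≥ -2`.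
For `η = 0` all the mass sits on the anchor forever, so `R = 0`.
-/

open Finset Real

noncomputable def expectedLoss {ι : Type*} [Fintype ι] (w ℓ : ι → ℝ) : ℝ :=
  ∑ i, w i / (∑ j, w j) * ℓ i

section ExpectedLoss

variable {ι : Type*} [Fintype ι]

theorem sum_mul_one_add_mul_sub_expectedLoss (w ℓ : ι → ℝ) (a : ι) (η : ℝ)
    (hw : ∑ i, w i ≠ 0) :
    (∑ i, w i) * (1 + η * (ℓ a - expectedLoss w ℓ)) = ∑ i, w i * (1 + η * (ℓ a - ℓ i)) := by
  have hmean : (∑ i, w i) * expectedLoss w ℓ = ∑ i, w i * ℓ i := by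
    rw [expectedLoss, mul_sum]
    exact sum_congr rfl fun i _ => by field_simp
  simp only [mul_add, mul_sub, mul_one, sum_add_distrib, sum_sub_distrib, ← sum_mul,
    mul_left_comm _ η, ← mul_sum, hmean]

theorem expectedLoss_eq_of_forall_ne_eq_zero {w : ι → ℝ} {a : ι}
    (hw : ∀ i, i ≠ a → w i = 0) (ha : w a ≠ 0) (ℓ : ι → ℝ) : expectedLoss w ℓ = ℓ a := by
  have hsum : ∑ i, w i = w a := Fintype.sum_eq_single a hw
  rw [expectedLoss, Fintype.sum_eq_single a fun i hi => by rw [hw i hi, zero_div, zero_mul],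
    hsum, div_self ha, one_mul]

end ExpectedLoss

theorem prod_one_add_le_exp_sum_of_nonneg {κ : Type*} (s : Finset κ) {f : κ → ℝ}
    (hf : ∀ i ∈ s, 0 ≤ 1 + f i) : ∏ i ∈ s, (1 + f i) ≤ exp (∑ i ∈ s, f i) := by
  rw [exp_sum]
  exact prod_le_prod hf fun i _ => by linarith [add_one_le_exp (f i)]

theorem exp_neg_two_mul_le_one_sub {η : ℝ} (h0 : 0 ≤ η) (h : η ≤ 1 / 2) :
    exp (-(2 * η)) ≤ 1 - η := by
  have hpos : 0 < 1 - η := by linarith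
  rw [← le_log_iff_exp_le hpos]
  have hinv : 1 - (1 - η)⁻¹ = -(η / (1 - η)) := by field_simp; ring
  have hfrac : η / (1 - η) ≤ 2 * η := by
    rw [div_le_iff₀ hpos]
    nlinarith
  linarith [one_sub_inv_le_log_of_pos hpos]

theorem one_add_mul_sub_nonneg {x y M η : ℝ} (hx : |x| ≤ M) (hy : |y| ≤ M) (hη : 0 ≤ η)
    (hMη : 2 * M * η ≤ 1) : 0 ≤ 1 + η * (x - y) := by
  have hyx : y - x ≤ 2 * M := by linarith [le_abs_self y, neg_abs_le x]
  nlinarith [mul_le_mul_of_nonneg_left hyx hη]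

section ProdWeights

variable {ι : Type*} {a : ι} {η : ℝ} {ℓ q : ℕ → ι → ℝ}

theorem prodWeights_anchor
    (hrec : ∀ t, 1 ≤ t → ∀ i, q (t + 1) i = q t i * (1 + η * (ℓ t a - ℓ t i)))
    {t : ℕ} (ht : 1 ≤ t) : q t a = q 1 a := by
  induction t, ht using Nat.le_induction with
  | base => rfl
  | succ t ht ih => rw [hrec t ht a, ih, sub_self, mul_zero, add_zero, mul_one]

theorem prodWeights_eq_zero
    (hrec : ∀ t, 1 ≤ t → ∀ i, q (t + 1) i = q t i * (1 + η * (ℓ t a - ℓ t i)))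
    {i : ι} (hi : q 1 i = 0) {t : ℕ} (ht : 1 ≤ t) : q t i = 0 := by
  induction t, ht using Nat.le_induction with
  | base => exact hi
  | succ t ht ih => rw [hrec t ht i, ih, zero_mul]

theorem prodWeights_nonneg [Fintype ι] {T : ℕ}
    (hrec : ∀ t, 1 ≤ t → ∀ i, q (t + 1) i = q t i * (1 + η * (ℓ t a - ℓ t i)))
    (h1 : ∀ i, 0 ≤ q 1 i) (hfac : ∀ t ∈ Icc 1 T, ∀ i, 0 ≤ 1 + η * (ℓ t a - ℓ t i))
    {t : ℕ} (hmem : t ∈ Icc 1 (T + 1)) (i : ι) : 0 ≤ q t i := by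
  obtain ⟨h1t, htT⟩ := mem_Icc.mp hmem
  induction t, h1t using Nat.le_induction with
  | base => exact h1 i
  | succ t ht ih =>
    rw [hrec t ht i]
    exact mul_nonneg (ih (mem_Icc.mpr ⟨ht, by omega⟩) (by omega))
      (hfac t (mem_Icc.mpr ⟨ht, by omega⟩) i)

theorem prodWeights_sum_succ [Fintype ι]
    (hrec : ∀ t, 1 ≤ t → ∀ i, q (t + 1) i = q t i * (1 + η * (ℓ t a - ℓ t i)))
    {T : ℕ} (hW : ∀ t ∈ Icc 1 T, ∑ i, q t i ≠ 0) :
    ∑ i, q (T + 1) i =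
      (∑ i, q 1 i) * ∏ t ∈ Icc 1 T, (1 + η * (ℓ t a - expectedLoss (q t) (ℓ t))) := by
  induction T with
  | zero => simp
  | succ T ih =>
    have hT : T + 1 ∈ Icc 1 (T + 1) := mem_Icc.mpr ⟨by omega, le_rfl⟩
    rw [prod_Icc_succ_top (by omega), ← mul_assoc,
      ← ih fun t ht => hW t (Icc_subset_Icc_right (by omega) ht),
      sum_mul_one_add_mul_sub_expectedLoss _ _ _ _ (hW _ hT)]
    exact sum_congr rfl fun i _ => hrec (T + 1) (by omega) i

theorem prodWeights_regret_le_two_of_pos [Fintype ι] {T : ℕ}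
    (hrec : ∀ t, 1 ≤ t → ∀ i, q (t + 1) i = q t i * (1 + η * (ℓ t a - ℓ t i)))
    (hpos : 0 < η) (hhalf : η ≤ 1 / 2) (h1 : ∀ i, 0 ≤ q 1 i) (ha : q 1 a = 1 - η)
    (hsum : ∑ i, q 1 i = 1) (hfac : ∀ t ∈ Icc 1 T, ∀ i, 0 ≤ 1 + η * (ℓ t a - ℓ t i)) :
    ∑ t ∈ Icc 1 T, expectedLoss (q t) (ℓ t) ≤ ∑ t ∈ Icc 1 T, ℓ t a + 2 := by
  have hnonneg : ∀ t ∈ Icc 1 (T + 1), ∀ i, 0 ≤ q t i := fun t ht =>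
    prodWeights_nonneg hrec h1 hfac ht
  have hW : ∀ t ∈ Icc 1 (T + 1), 1 - η ≤ ∑ i, q t i := fun t ht => by
    rw [← ha, ← prodWeights_anchor hrec (mem_Icc.mp ht).1]
    exact single_le_sum (fun i _ => hnonneg t ht i) (mem_univ a)
  have hWpos : ∀ t ∈ Icc 1 T, 0 < ∑ i, q t i := fun t ht => by
    linarith [hW t (Icc_subset_Icc_right (Nat.le_succ T) ht)]
  set r := fun t => ℓ t a - expectedLoss (q t) (ℓ t) with hr
  have hF : ∀ t ∈ Icc 1 T, 0 ≤ 1 + η * r t := fun t ht => by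
    refine nonneg_of_mul_nonneg_right ?_ (hWpos t ht)
    rw [sum_mul_one_add_mul_sub_expectedLoss _ _ _ _ (hWpos t ht).ne']
    exact sum_nonneg fun i _ =>
      mul_nonneg (hnonneg t (Icc_subset_Icc_right (Nat.le_succ T) ht) i) (hfac t ht i)
  have hexp : exp (η * (-2)) ≤ exp (η * ∑ t ∈ Icc 1 T, r t) := calc
    exp (η * (-2)) ≤ 1 - η := by
      rw [mul_neg, mul_comm]; exact exp_neg_two_mul_le_one_sub hpos.le hhalf
    _ ≤ ∑ i, q (T + 1) i := hW (T + 1) (mem_Icc.mpr ⟨by omega, le_rfl⟩)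
    _ = ∏ t ∈ Icc 1 T, (1 + η * r t) := by
      rw [prodWeights_sum_succ hrec fun t ht => (hWpos t ht).ne', hsum, one_mul]
    _ ≤ exp (η * ∑ t ∈ Icc 1 T, r t) := by
      rw [mul_sum]; exact prod_one_add_le_exp_sum_of_nonneg _ hF
  have hregret : -2 ≤ ∑ t ∈ Icc 1 T, r t := le_of_mul_le_mul_left (exp_le_exp.mp hexp) hpos
  rw [hr, sum_sub_distrib] at hregret
  linarith

theorem prodWeights_sum_expectedLoss_of_concentrated [Fintype ι] {T : ℕ}
    (hrec : ∀ t, 1 ≤ t → ∀ i, q (t + 1) i = q t i * (1 + η * (ℓ t a - ℓ t i)))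
    (hzero : ∀ i, i ≠ a → q 1 i = 0) (ha : q 1 a ≠ 0) :
    ∑ t ∈ Icc 1 T, expectedLoss (q t) (ℓ t) = ∑ t ∈ Icc 1 T, ℓ t a :=
  sum_congr rfl fun t ht =>
    have ht1 := (mem_Icc.mp ht).1
    expectedLoss_eq_of_forall_ne_eq_zero
      (fun i hi => prodWeights_eq_zero hrec (hzero i hi) ht1)
      (by rwa [prodWeights_anchor hrec ht1]) (ℓ t)

theorem prodWeights_regret_le_two [Fintype ι] [DecidableEq ι] {T : ℕ}
    (hrec : ∀ t, 1 ≤ t → ∀ i, q (t + 1) i = q t i * (1 + η * (ℓ t a - ℓ t i)))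
    (h0 : 0 ≤ η) (hhalf : η ≤ 1 / 2) (h1 : ∀ i, 0 ≤ q 1 i) (ha : q 1 a = 1 - η)
    (hsum : ∑ i, q 1 i = 1) (hfac : ∀ t ∈ Icc 1 T, ∀ i, 0 ≤ 1 + η * (ℓ t a - ℓ t i)) :
    ∑ t ∈ Icc 1 T, expectedLoss (q t) (ℓ t) ≤ ∑ t ∈ Icc 1 T, ℓ t a + 2 := by
  rcases h0.eq_or_lt with rfl | hpos
  · have hrest : ∑ i ∈ univ.erase a, q 1 i = 0 := by
      linarith [add_sum_erase univ (q 1) (mem_univ a)]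
    have hzero : ∀ i, i ≠ a → q 1 i = 0 := fun i hi =>
      (sum_eq_zero_iff_of_nonneg fun j _ => h1 j).mp hrest i (mem_erase.mpr ⟨hi, mem_univ i⟩)
    rw [prodWeights_sum_expectedLoss_of_concentrated hrec hzero (by rw [ha]; norm_num)]
    linarith
  · exact prodWeights_regret_le_two_of_pos hrec hpos hhalf h1 ha hsum hfac

end ProdWeights

theorem prod_tuned_regret_anchor_general
    (K T : ℕ) (hK : 0 < K)
    (M : ℝ) (hM : 1 ≤ M)
    (ℓ : ℕ → Fin (K + 1) → ℝ)
    (hℓ : ∀ t ∈ Finset.Icc 1 T, ∀ j, |ℓ t j| ≤ M)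
    (η : ℝ) (hηdef : η = (1 / (2 * M)) * Real.sqrt (Real.log (K * M * T) / T))
    (hη : η ≤ 1 / (4 * M))
    (q : ℕ → Fin (K + 1) → ℝ)
    (hq0 : q 1 0 = 1 - η)
    (hq1 : ∀ i : Fin (K + 1), i ≠ 0 → q 1 i = η / K)
    (hqrec : ∀ t, 1 ≤ t → ∀ i : Fin (K + 1),
      q (t + 1) i = q t i * (1 + η * (ℓ t 0 - ℓ t i)))
    (p : ℕ → Fin (K + 1) → ℝ)
    (hp : ∀ t i, p t i = q t i / ∑ j, q t j)
    :
    ∑ t ∈ Finset.Icc 1 T, ∑ j : Fin (K + 1), p t j * ℓ t j ≤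
      ∑ t ∈ Finset.Icc 1 T, ℓ t 0 + 2 := by
  have hM0 : 0 < M := by linarith
  have hη0 : 0 ≤ η := hηdef ▸ mul_nonneg (by positivity) (sqrt_nonneg _)
  have hMη : 4 * M * η ≤ 1 := by rwa [le_div_iff₀ (by positivity), mul_comm] at hη
  have hq1_nonneg : ∀ i, 0 ≤ q 1 i := fun i => by
    rcases eq_or_ne i 0 with rfl | hi
    · rw [hq0]; nlinarith
    · rw [hq1 i hi]; positivity
  have hq1_sum : ∑ i, q 1 i = 1 := by
    rw [Fin.sum_univ_succ, hq0]
    simp only [hq1 _ (Fin.succ_ne_zero _), sum_const, card_univ, Fintype.card_fin, nsmul_eq_mul]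
    field_simp
    ring
  have hfac : ∀ t ∈ Icc 1 T, ∀ i, 0 ≤ 1 + η * (ℓ t 0 - ℓ t i) := fun t ht i =>
    one_add_mul_sub_nonneg (hℓ t ht 0) (hℓ t ht i) hη0 (by linarith)
  have hmix : ∀ t, ∑ j, p t j * ℓ t j = expectedLoss (q t) (ℓ t) := fun t => by
    simp only [hp, expectedLoss]
  simp only [hmix]
  exact prodWeights_regret_le_two hqrec hη0 (by nlinarith) hq1_nonneg hq0 hq1_sum hfac

/-- Prod corollary, constant regret against the anchor expert with tuned learning
rate `η = (1/(2M))√(ln(KMT)/T)` (assumed `≤ 1/(4M)`), `M ≥ 1`: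
`∑_t ∑_j p^j_t ℓ_t(j) ≤ ∑_t ℓ_t(0) + 2`. -/
theorem prod_tuned_regret_anchor
    (K T : ℕ) (hK : 0 < K) (hT : 0 < T)
    (M : ℝ) (hM : 1 ≤ M)
    (ℓ : ℕ → Fin (K + 1) → ℝ)
    (hℓ : ∀ t ∈ Finset.Icc 1 T, ∀ j, |ℓ t j| ≤ M)
    (η : ℝ) (hηdef : η = (1 / (2 * M)) * Real.sqrt (Real.log (K * M * T) / T))
    (hη : η ≤ 1 / (4 * M))
    (q : ℕ → Fin (K + 1) → ℝ)
    (hq0 : q 1 0 = 1 - η)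
    (hq1 : ∀ i : Fin (K + 1), i ≠ 0 → q 1 i = η / K)
    (hqrec : ∀ t, 1 ≤ t → ∀ i : Fin (K + 1),
      q (t + 1) i = q t i * (1 + η * (ℓ t 0 - ℓ t i)))
    (p : ℕ → Fin (K + 1) → ℝ)
    (hp : ∀ t i, p t i = q t i / ∑ j, q t j)
    :
    ∑ t ∈ Finset.Icc 1 T, ∑ j : Fin (K + 1), p t j * ℓ t j ≤
      ∑ t ∈ Finset.Icc 1 T, ℓ t 0 + 2 :=
  prod_tuned_regret_anchor_general K T hK M hM ℓ hℓ η hηdef hη q hq0 hq1 hqrec p hp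
end
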